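/- Let F(σ, n) = h(n)² · |g(σ)| · (1 + (μ/(√|G(σ)|·n))²) be a positive C² function of (σ, n) ∈ I × ℝ_{>0}, where h, g, G are positive C² functions and μ a constant, and define v² by (1−v²)^{−1} = 1 + (μ/(√|G|·n))² and v_s² = d ln h / d ln n. Then ∂F/∂n = 2 F n^{−1} (v_s² − v²). -/

import Mathlib

/-!
With `K(n) = 1 + (c/n)²`, `c = μ/√|G(σ)|`, the Hamiltonian is `F = |g| h² K`, so its logarithmic
`n`-derivative is that of `h²`, namely `2 v_s²/n`, plus that of `K`, namely `-2 (K - 1)/(n K)`.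
Since `v² = 1 - K⁻¹ = (K - 1)/K`, the second term is `-2 v²/n`.
-/

lemma eq_one_sub_inv_of_inv_one_sub_eq {v K : ℝ} (h : (1 - v)⁻¹ = K) : v = 1 - K⁻¹ := by
  rw [← h, inv_inv]
  ring

lemma hasDerivAt_one_add_div_sq (c : ℝ) {n : ℝ} (hn : n ≠ 0) :
    HasDerivAt (fun m => 1 + (c / m) ^ 2) (-2 * n⁻¹ * (c / n) ^ 2) n := by
  have hdiv : HasDerivAt (fun m => c / m) (-c / n ^ 2) n := by
    simpa [div_eq_mul_inv, neg_div] using (hasDerivAt_inv hn).const_mul c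
  refine ((hdiv.fun_pow 2).const_add 1).congr_deriv ?_
  norm_num
  field_simp

theorem deriv_sq_mul_one_add_div_sq {h : ℝ → ℝ} {n : ℝ} (hh : DifferentiableAt ℝ h n)
    (hn : n ≠ 0) (a c : ℝ) :
    deriv (fun m => h m ^ 2 * a * (1 + (c / m) ^ 2)) n =
      2 * (h n ^ 2 * a * (1 + (c / n) ^ 2)) * n⁻¹ *
        (n * deriv h n / h n - (1 - (1 + (c / n) ^ 2)⁻¹)) := by
  have hK : 1 + (c / n) ^ 2 ≠ 0 := by positivity
  have hF : HasDerivAt (fun m => h m ^ 2 * a * (1 + (c / m) ^ 2))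
      (2 * h n * deriv h n * a * (1 + (c / n) ^ 2) + h n ^ 2 * a * (-2 * n⁻¹ * (c / n) ^ 2)) n := by
    refine (((hh.hasDerivAt.fun_pow 2).mul_const a).fun_mul
      (hasDerivAt_one_add_div_sq c hn)).congr_deriv ?_
    norm_num
  rw [hF.deriv]
  -- `h² · (h'/h) = h h'` holds also when `h n = 0`
  have hlog : h n ^ 2 * (deriv h n / h n) = h n * deriv h n := by
    rw [sq, mul_comm, div_mul_eq_mul_div, mul_div_assoc, mul_self_div_self, mul_comm]
  linear_combination (-2 * a * (1 + (c / n) ^ 2) * h n ^ 2 * (deriv h n / h n)) * mul_inv_cancel₀ hn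
    + (-2 * a * (1 + (c / n) ^ 2)) * hlog + (-2 * h n ^ 2 * a * n⁻¹) * mul_inv_cancel₀ hK

theorem hamiltonian_n_gradient_general
    (h g G : ℝ → ℝ) (μ : ℝ)
    (hh : ContDiff ℝ 2 h)
    (F : ℝ → ℝ → ℝ)
    (hF : ∀ σ n, F σ n = (h n) ^ 2 * |g σ| * (1 + (μ / (Real.sqrt |G σ| * n)) ^ 2))
    (vs2 : ℝ → ℝ) (hvs2 : ∀ n, vs2 n = n * deriv h n / h n)
    (v2 : ℝ → ℝ → ℝ)
    (hv2 : ∀ σ n, (1 - v2 σ n)⁻¹ = 1 + (μ / (Real.sqrt |G σ| * n)) ^ 2) :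
    ∀ σ : ℝ, ∀ n : ℝ, 0 < n →
      deriv (fun m => F σ m) n = 2 * F σ n * n⁻¹ * (vs2 n - v2 σ n) := by
  intro σ n hn
  have hFσ : (fun m => F σ m) = fun m => h m ^ 2 * |g σ| * (1 + (μ / √|G σ| / m) ^ 2) := by
    funext m
    rw [hF, div_div]
  rw [hFσ, deriv_sq_mul_one_add_div_sq (hh.differentiable (by norm_num) n) hn.ne', hF, hvs2,
    eq_one_sub_inv_of_inv_one_sub_eq (hv2 σ n), div_div]

/-- The `n`-gradient of the accretion Hamiltonian
`F(σ,n) = h(n)² |g(σ)| (1 + (μ/(√|G(σ)| n))²)` is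
`∂F/∂n = 2 F n⁻¹ (v_s² - v²)`, identifying the `σ`-nullcline with the sonic locus. -/
theorem hamiltonian_n_gradient
    (h g G : ℝ → ℝ) (μ : ℝ)
    (hh : ContDiff ℝ 2 h) (hg : ContDiff ℝ 2 g) (hG : ContDiff ℝ 2 G)
    (hhpos : ∀ n, 0 < h n) (hgpos : ∀ σ, 0 < g σ) (hGpos : ∀ σ, 0 < G σ)
    (F : ℝ → ℝ → ℝ)
    (hF : ∀ σ n, F σ n = (h n) ^ 2 * |g σ| * (1 + (μ / (Real.sqrt |G σ| * n)) ^ 2))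
    (vs2 : ℝ → ℝ) (hvs2 : ∀ n, vs2 n = n * deriv h n / h n)
    (v2 : ℝ → ℝ → ℝ)
    (hv2 : ∀ σ n, (1 - v2 σ n)⁻¹ = 1 + (μ / (Real.sqrt |G σ| * n)) ^ 2) :
    ∀ σ : ℝ, ∀ n : ℝ, 0 < n →
      deriv (fun m => F σ m) n = 2 * F σ n * n⁻¹ * (vs2 n - v2 σ n) :=
  hamiltonian_n_gradient_general h g G μ hh F hF vs2 hvs2 v2 hv2
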